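/- arXiv:2310.17850 — 4 statements merged into one kernel-verified Lean document; each statement's English description precedes it below -/
import Mathlib

section
/- Let γ=((a,b),(c,d)) ∈ SL₂(ℤ) with c≠0, let x=(x₁,x₂) ∈ ℚ², and let ω=(ω₁,ω₂) ∈ ℝ² have entries linearly independent over ℚ. Suppose there exists α ∈ ℝ such that γᵀω = α·ω (i.e. aω₁+cω₂ = αω₁ and bω₁+dω₂ = αω₂) and α⁻¹v − v ∈ Λ, where v := x₁ω₁+x₂ω₂ and Λ := ℤω₁ ⊕ ℤω₂. Then 𝔷₀(γ)(x,ω) = ((a+d)/(2c))·B̄₂(x₂) + sgn(c)·S(−a,c;x) − (sgn(cα)/4)·1_ℤ(x₁)·1_ℤ(x₂); in particular 𝔷₀(γ)(x,ω) is a rational number. -/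
open scoped Pointwise Classical
open MeasureTheory

/-- Periodic Bernoulli function `B̄₁`. -/
noncomputable def B1 (y : ℝ) : ℝ := if ∃ n : ℤ, (n : ℝ) = y then 0 else Int.fract y - 1 / 2

/-- Periodic Bernoulli function `B̄₂`. -/
noncomputable def B2 (y : ℝ) : ℝ := Int.fract y ^ 2 - Int.fract y + 1 / 6

/-- Dedekind–Rademacher sum `S(a,c;x)`. -/
noncomputable def DR (a c : ℤ) (x₁ x₂ : ℝ) : ℝ :=
  ∑ m ∈ Finset.range c.natAbs, B1 (x₁ + (x₂ + m) * a / c) * B1 ((x₂ + m) / c)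

/-- Indicator function of `ℤ ⊆ ℚ`. -/
def indZ (q : ℚ) : ℝ := if q.den = 1 then 1 else 0

/-- The cocycle `𝔷₀(γ)(x, ω)` for `γ` with entries `a, b, c, d` and `c ≠ 0`;
only `a` and `c` enter the formula. -/
noncomputable def Z0 (a c : ℤ) (x₁ x₂ : ℚ) (ω₁ ω₂ : ℝ) : ℝ :=
  (Int.gcd a c : ℝ) ^ 2 / (2 * c * ((a : ℝ) + c * (ω₂ / ω₁))) *
      B2 (((c : ℝ) / (Int.gcd a c : ℝ)) * (x₁ : ℝ) - ((a : ℝ) / (Int.gcd a c : ℝ)) * (x₂ : ℝ))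
    + ((a : ℝ) + c * (ω₂ / ω₁)) / (2 * c) * B2 (x₂ : ℝ)
    + Real.sign (c : ℝ) * DR (-a) c (x₁ : ℝ) (x₂ : ℝ)
    - Real.sign ((c : ℝ) * ((a : ℝ) + c * (ω₂ / ω₁))) / 4 * indZ x₁ * indZ x₂

/-- The closed triangle `T_γ` in `ℝ²` with vertices `(0,0)`, `(a−1,c)`, `(−1,0)`. -/
def Tri (a c : ℤ) : Set (ℝ × ℝ) :=
  convexHull ℝ {((0 : ℝ), (0 : ℝ)), (((a : ℝ) - 1), (c : ℝ)), ((-1 : ℝ), (0 : ℝ))}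

/-- Number of integral points in a subset of `ℝ²`. -/
noncomputable def latticeCount (S : Set (ℝ × ℝ)) : ℕ :=
  Set.ncard {p : ℤ × ℤ | ((p.1 : ℝ), (p.2 : ℝ)) ∈ S}

/-- The `0`th Ehrhart coefficient `G₀(ℓ⁻¹ T_σ, m)` of the dilated triangle `ℓ⁻¹ T_σ`,
obtained by subtracting the second and first Ehrhart coefficient terms from the
lattice point count of `(m/ℓ)·T_σ`. -/
noncomputable def G0 (aσ cσ : ℤ) (ℓσ ℓ : ℕ) (m : ℕ) : ℝ :=
  (latticeCount (((m : ℝ) / (ℓ : ℝ)) • Tri aσ cσ) : ℝ)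
    - (cσ : ℝ) / (2 * (ℓ : ℝ) ^ 2) * (m : ℝ) ^ 2
    - ((ℓσ : ℝ) + 2) / (2 * (ℓ : ℝ)) * (m : ℝ)


/-! The eigenvector equations together with `ad - bc = 1` give `α = a + cτ` and
`α⁻¹ = d - cτ`, so `α + α⁻¹ = a + d`, and multiplication by `α⁻¹` acts on the coordinates
of `v` through the adjugate of `γᵀ`. By `ℚ`-linear independence of `ω₁, ω₂`, the condition
`α⁻¹v - v ∈ Λ` then says `cx₁ - ax₂ ≡ -x₂ (mod ℤ)`. Since `gcd(a, c) = 1`, evenness and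
periodicity of `B̄₂` turn the first term of `𝔷₀` into `B̄₂(x₂)/(2cα)`, which combines with the
second into `(a + d)/(2c) · B̄₂(x₂)`. The remaining terms are built from rational data by
field operations, `{·}`, `sgn` and `1_ℤ`, all of which preserve `ℚ ⊆ ℝ`. -/

lemma B2_add_intCast (t : ℝ) (n : ℤ) : B2 (t + n) = B2 t := by
  simp [B2, Int.fract_add_intCast]

lemma B2_neg (t : ℝ) : B2 (-t) = B2 t := by
  unfold B2
  rcases eq_or_ne (Int.fract t) 0 with h | h
  · rw [Int.fract_neg_eq_zero.mpr h, h]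
  · rw [Int.fract_neg h]; ring

lemma Z0_of_gcd_eq_one {a c : ℤ} (h : Int.gcd a c = 1) (x₁ x₂ : ℚ) (ω₁ ω₂ : ℝ) :
    Z0 a c x₁ x₂ ω₁ ω₂
      = B2 (c * x₁ - a * x₂) / (2 * c * (a + c * (ω₂ / ω₁)))
        + (a + c * (ω₂ / ω₁)) / (2 * c) * B2 x₂
        + Real.sign (c : ℝ) * DR (-a) c x₁ x₂
        - Real.sign (c * (a + c * (ω₂ / ω₁))) / 4 * indZ x₁ * indZ x₂ := by
  simp only [Z0, h, Nat.cast_one, one_pow, div_one]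
  ring

section Eigenvector

variable {a b c d : ℤ} {ω₁ ω₂ α : ℝ}

lemma inv_mul_eq_of_eigenvector (hdet : a * d - b * c = 1) (hω₁ : ω₁ ≠ 0)
    (h1 : (a : ℝ) * ω₁ + c * ω₂ = α * ω₁) (h2 : (b : ℝ) * ω₁ + d * ω₂ = α * ω₂) (x₁ x₂ : ℝ) :
    α⁻¹ * (x₁ * ω₁ + x₂ * ω₂) = (d * x₁ - b * x₂) * ω₁ + (a * x₂ - c * x₁) * ω₂ := by
  have hdetR : (a : ℝ) * d - b * c = 1 := by exact_mod_cast hdet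
  have key : α * ((d * x₁ - b * x₂) * ω₁ + (a * x₂ - c * x₁) * ω₂) = x₁ * ω₁ + x₂ * ω₂ := by
    linear_combination -(d * x₁ - b * x₂) * h1 - (a * x₂ - c * x₁) * h2
      + (x₁ * ω₁ + x₂ * ω₂) * hdetR
  have hα : α ≠ 0 := by
    rintro rfl
    exact hω₁ (by linear_combination d * h1 - c * h2 - ω₁ * hdetR)
  rw [← key, inv_mul_cancel_left₀ hα]

lemma eq_of_eigenvector (hω₁ : ω₁ ≠ 0) (h1 : (a : ℝ) * ω₁ + c * ω₂ = α * ω₁) :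
    α = a + c * (ω₂ / ω₁) := by
  field_simp
  linear_combination -h1

lemma add_inv_eq_of_eigenvector (hdet : a * d - b * c = 1) (hω₁ : ω₁ ≠ 0)
    (h1 : (a : ℝ) * ω₁ + c * ω₂ = α * ω₁) (h2 : (b : ℝ) * ω₁ + d * ω₂ = α * ω₂) :
    α + α⁻¹ = a + d := by
  have h := inv_mul_eq_of_eigenvector hdet hω₁ h1 h2 1 0
  have hα_inv : α⁻¹ = d - c * (ω₂ / ω₁) := by
    field_simp
    linear_combination h
  rw [hα_inv, eq_of_eigenvector hω₁ h1]
  ring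

lemma exists_int_of_inv_mul_sub_mem_lattice {x₁ x₂ : ℚ} (hdet : a * d - b * c = 1)
    (hω : LinearIndependent ℚ ![ω₁, ω₂])
    (h1 : (a : ℝ) * ω₁ + c * ω₂ = α * ω₁) (h2 : (b : ℝ) * ω₁ + d * ω₂ = α * ω₂)
    (h3 : ∃ m n : ℤ,
      α⁻¹ * ((x₁ : ℝ) * ω₁ + (x₂ : ℝ) * ω₂) - ((x₁ : ℝ) * ω₁ + (x₂ : ℝ) * ω₂)
        = (m : ℝ) * ω₁ + (n : ℝ) * ω₂) :
    ∃ n : ℤ, (c : ℝ) * x₁ - a * x₂ = -(x₂ + n) := by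
  obtain ⟨m, n, hmn⟩ := h3
  rw [inv_mul_eq_of_eigenvector hdet (by simpa using hω.ne_zero 0) h1 h2] at hmn
  have hcoord := hω.eq_of_pair (s := (d * x₁ - b * x₂ - x₁ : ℚ)) (t := (a * x₂ - c * x₁ - x₂ : ℚ))
    (s' := m) (t' := n) (by simp only [Rat.smul_def]; push_cast; linear_combination hmn)
  refine ⟨n, ?_⟩
  have h := congrArg (fun q : ℚ => (q : ℝ)) hcoord.2
  push_cast at h
  linear_combination -h

end Eigenvector

lemma mem_bot_iff_exists_ratCast {y : ℝ} : y ∈ (⊥ : Subfield ℝ) ↔ ∃ q : ℚ, y = q := by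
  simp [Subfield.bot_eq_of_charZero, RingHom.mem_fieldRange, eq_comm]

section SubfieldMembership

variable (K : Subfield ℝ) {y : ℝ}

lemma Int.fract_mem (hy : y ∈ K) : Int.fract y ∈ K :=
  sub_mem hy (intCast_mem K _)

lemma B1_mem (hy : y ∈ K) : B1 y ∈ K := by
  unfold B1
  split_ifs
  · exact zero_mem K
  · exact sub_mem (Int.fract_mem K hy) (div_mem (one_mem K) (ofNat_mem K 2))

lemma B2_mem (hy : y ∈ K) : B2 y ∈ K := by
  have hf := Int.fract_mem K hy
  exact add_mem (sub_mem (pow_mem hf 2) hf) (div_mem (one_mem K) (ofNat_mem K 6))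

lemma DR_mem (a c : ℤ) {x₁ x₂ : ℝ} (h₁ : x₁ ∈ K) (h₂ : x₂ ∈ K) : DR a c x₁ x₂ ∈ K := by
  have hm (m : ℕ) : x₂ + m ∈ K := add_mem h₂ (natCast_mem K m)
  refine sum_mem fun m _ => mul_mem (B1_mem K ?_) (B1_mem K ?_)
  · exact add_mem h₁ (div_mem (mul_mem (hm m) (intCast_mem K a)) (intCast_mem K c))
  · exact div_mem (hm m) (intCast_mem K c)

lemma Real.sign_mem (r : ℝ) : Real.sign r ∈ K := by
  rcases Real.sign_apply_eq r with h | h | h <;> rw [h]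
  exacts [neg_mem (one_mem K), zero_mem K, one_mem K]

lemma indZ_mem (q : ℚ) : indZ q ∈ K := by
  unfold indZ
  split_ifs
  exacts [one_mem K, zero_mem K]

lemma trace_formula_mem (a c d : ℤ) (x₁ x₂ : ℚ) (s : ℝ) :
    ((a : ℝ) + d) / (2 * c) * B2 x₂ + Real.sign (c : ℝ) * DR (-a) c x₁ x₂
      - Real.sign s / 4 * indZ x₁ * indZ x₂ ∈ K := by
  have hx₁ := SubfieldClass.ratCast_mem K x₁
  have hx₂ := SubfieldClass.ratCast_mem K x₂
  refine sub_mem (add_mem (mul_mem ?_ (B2_mem K hx₂)) (mul_mem (Real.sign_mem K _)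
    (DR_mem K _ _ hx₁ hx₂))) (mul_mem (mul_mem ?_ (indZ_mem K _)) (indZ_mem K _))
  · exact div_mem (add_mem (intCast_mem K a) (intCast_mem K d))
      (mul_mem (ofNat_mem K 2) (intCast_mem K c))
  · exact div_mem (Real.sign_mem K _) (ofNat_mem K 4)

end SubfieldMembership

theorem statement3_general (a b c d : ℤ) (hdet : a * d - b * c = 1)
    (x₁ x₂ : ℚ) (ω₁ ω₂ : ℝ) (hω : LinearIndependent ℚ ![ω₁, ω₂]) (α : ℝ)
    (h1 : (a : ℝ) * ω₁ + c * ω₂ = α * ω₁) (h2 : (b : ℝ) * ω₁ + d * ω₂ = α * ω₂)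
    (h3 : ∃ m n : ℤ,
      α⁻¹ * ((x₁ : ℝ) * ω₁ + (x₂ : ℝ) * ω₂) - ((x₁ : ℝ) * ω₁ + (x₂ : ℝ) * ω₂)
        = (m : ℝ) * ω₁ + (n : ℝ) * ω₂) :
    Z0 a c x₁ x₂ ω₁ ω₂
      = ((a : ℝ) + (d : ℝ)) / (2 * c) * B2 (x₂ : ℝ)
        + Real.sign (c : ℝ) * DR (-a) c (x₁ : ℝ) (x₂ : ℝ)
        - Real.sign ((c : ℝ) * α) / 4 * indZ x₁ * indZ x₂
    ∧ ∃ q : ℚ, Z0 a c x₁ x₂ ω₁ ω₂ = (q : ℝ) := by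
  have hω₁ : ω₁ ≠ 0 := by simpa using hω.ne_zero 0
  obtain ⟨n, hn⟩ := exists_int_of_inv_mul_sub_mem_lattice hdet hω h1 h2 h3
  have hB2 : B2 (c * x₁ - a * x₂) = B2 x₂ := by rw [hn, B2_neg, B2_add_intCast]
  have hg : Int.gcd a c = 1 :=
    Int.isCoprime_iff_gcd_eq_one.mp ⟨d, -b, by linear_combination hdet⟩
  have hZ0 : Z0 a c x₁ x₂ ω₁ ω₂
      = ((a : ℝ) + (d : ℝ)) / (2 * c) * B2 (x₂ : ℝ)
        + Real.sign (c : ℝ) * DR (-a) c (x₁ : ℝ) (x₂ : ℝ)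
        - Real.sign ((c : ℝ) * α) / 4 * indZ x₁ * indZ x₂ := by
    rw [Z0_of_gcd_eq_one hg, ← eq_of_eigenvector hω₁ h1, hB2,
      ← add_inv_eq_of_eigenvector hdet hω₁ h1 h2]
    ring
  refine ⟨hZ0, mem_bot_iff_exists_ratCast.mp ?_⟩
  rw [hZ0]
  exact trace_formula_mem ⊥ a c d x₁ x₂ _

/-- **Theorem (Statement 3).** Rationality of `𝔷₀(γ)(x,ω)` when `ω` is an eigenvector. -/
theorem statement3 (a b c d : ℤ) (hdet : a * d - b * c = 1) (hc : c ≠ 0)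
    (x₁ x₂ : ℚ) (ω₁ ω₂ : ℝ) (hω : LinearIndependent ℚ ![ω₁, ω₂]) (α : ℝ)
    (h1 : (a : ℝ) * ω₁ + c * ω₂ = α * ω₁) (h2 : (b : ℝ) * ω₁ + d * ω₂ = α * ω₂)
    (h3 : ∃ m n : ℤ,
      α⁻¹ * ((x₁ : ℝ) * ω₁ + (x₂ : ℝ) * ω₂) - ((x₁ : ℝ) * ω₁ + (x₂ : ℝ) * ω₂)
        = (m : ℝ) * ω₁ + (n : ℝ) * ω₂) :
    Z0 a c x₁ x₂ ω₁ ω₂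
      = ((a : ℝ) + (d : ℝ)) / (2 * c) * B2 (x₂ : ℝ)
        + Real.sign (c : ℝ) * DR (-a) c (x₁ : ℝ) (x₂ : ℝ)
        - Real.sign ((c : ℝ) * α) / 4 * indZ x₁ * indZ x₂
    ∧ ∃ q : ℚ, Z0 a c x₁ x₂ ω₁ ω₂ = (q : ℝ) :=
  statement3_general a b c d hdet x₁ x₂ ω₁ ω₂ hω α h1 h2 h3
end

section
/- Let γ=((a,b),(c,d)) ∈ SL₂(ℤ) with c>0 and ℓ_γ := gcd(c,a−1) > 1, let x=(x₁,0) with x₁ ∈ ℓ_γ⁻¹ℤ ∖ ℤ, and let ω=(ω₁,ω₂) ∈ ℝ² have entries linearly independent over ℚ; set τ := ω₂/ω₁. Then 𝔷₀(γ)(x,ω) − 𝔷₀(γ)(ℓ_γ·x, ℓ_γ⁻¹·ω) = sgn(a+cτ)/4 + (1/2)·B̄₁(d·x₁) + (c/2)·{x₁} − Σ_{m=1}^{c{x₁}} {m·d/c}, where c{x₁} is a positive integer. -/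
open scoped Pointwise Classical
open MeasureTheory

/-! With `x₂ = 0`, both `c·x₁` and `c·ℓx₁` are integers, so the `B̄₂`-terms of the two cocycle
values cancel and the indicator terms leave `sgn(a + cτ)/4`; what remains is a difference of two
Dedekind–Rademacher sums. Write `x₁ = ⌊x₁⌋ + N/c` and let `b` be `t ↦ B̄₁(t/c)` on `ℤ/c`. After the
substitution `m = -t·d` (using `ad ≡ 1 mod c`) the difference becomes `∑ₜ (b(t+N) - b(t))·b(-td)`.
Telescope `b(t+N) - b(t)` into unit steps `b(t+1) - b(t) = 1/c - ½[t = 0] - ½[t = -1]`: as `b` has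
mean zero, the `k`-th step contributes only `-½(b(kd) + b((k+1)d))`, and these boundary terms sum
to `½ B̄₁(d x₁) + N/2 - ∑_{m ≤ N} {md/c}`. -/

lemma B1_add_intCast (y : ℝ) (k : ℤ) : B1 (y + k) = B1 y := by
  have hint : (∃ n : ℤ, (n : ℝ) = y + k) ↔ ∃ n : ℤ, (n : ℝ) = y :=
    ⟨fun ⟨n, hn⟩ => ⟨n - k, by push_cast; linarith⟩, fun ⟨n, hn⟩ => ⟨n + k, by push_cast; linarith⟩⟩
  simp only [B1, hint, Int.fract_add_intCast]

lemma sum_range_add_succ_eq_sum_Icc (g : ℕ → ℝ) (N : ℕ) :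
    ∑ k ∈ Finset.range N, (g k + g (k + 1))
      = 2 * ∑ k ∈ Finset.Icc 1 N, g k + g 0 - g N := by
  have hIcc : ∑ k ∈ Finset.range N, g (k + 1) = ∑ k ∈ Finset.Icc 1 N, g k := by
    rw [Finset.range_eq_Ico, Finset.sum_Ico_add', Finset.Ico_add_one_right_eq_Icc, zero_add]
  have h := (Finset.sum_range_succ g N).symm.trans (Finset.sum_range_succ' g N)
  rw [Finset.sum_add_distrib, ← hIcc]
  linarith

noncomputable def B1ZMod (c : ℕ) (t : ZMod c) : ℝ := B1 (t.val / c)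

lemma B1ZMod_zero (c : ℕ) : B1ZMod c 0 = 0 := by
  simp [B1ZMod, B1]

section ZModSums

variable {c : ℕ} [NeZero c]

lemma B1_intCast_div (k : ℤ) : B1 ((k : ℝ) / c) = B1ZMod c k := by
  have hc : (c : ℝ) ≠ 0 := NeZero.ne _
  have hk : (k : ℝ) / c = (((k : ZMod c).val : ℤ) : ℝ) / c + (k / c : ℤ) := by
    rw [ZMod.val_intCast]
    field_simp
    exact_mod_cast (Int.emod_add_mul_ediv k c).symm
  rw [hk, B1_add_intCast, B1ZMod, Int.cast_natCast]

lemma B1ZMod_of_ne_zero {t : ZMod c} (ht : t ≠ 0) : B1ZMod c t = t.val / c - 1 / 2 := by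
  have hc : (0 : ℝ) < c := Nat.cast_pos.mpr (NeZero.pos c)
  have hval : 0 < t.val := Nat.pos_of_ne_zero ((ZMod.val_eq_zero t).not.mpr ht)
  have hlt : (t.val : ℝ) / c < 1 := (div_lt_one hc).mpr (by exact_mod_cast ZMod.val_lt t)
  have hpos : 0 < (t.val : ℝ) / c := by positivity
  have hnot : ¬∃ n : ℤ, (n : ℝ) = t.val / c := by
    rintro ⟨n, hn⟩
    have h0 : (0 : ℝ) < n := hn ▸ hpos
    have h1 : (n : ℝ) < 1 := hn ▸ hlt
    have : (0 : ℤ) < n ∧ n < 1 := ⟨by exact_mod_cast h0, by exact_mod_cast h1⟩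
    omega
  rw [B1ZMod, B1, if_neg hnot, Int.fract_eq_self.mpr ⟨hpos.le, hlt⟩]

lemma B1ZMod_eq (t : ZMod c) :
    B1ZMod c t = t.val / c - 1 / 2 + if t = 0 then 1 / 2 else 0 := by
  rcases eq_or_ne t 0 with rfl | ht
  · simp [B1ZMod_zero]
  · rw [B1ZMod_of_ne_zero ht, if_neg ht, add_zero]

lemma B1ZMod_neg (t : ZMod c) : B1ZMod c (-t) = -B1ZMod c t := by
  rcases eq_or_ne t 0 with rfl | ht
  · simp [B1ZMod_zero]
  have hc : (c : ℝ) ≠ 0 := NeZero.ne _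
  rw [B1ZMod_of_ne_zero (neg_ne_zero.mpr ht), B1ZMod_of_ne_zero ht, ZMod.neg_val, if_neg ht,
    Nat.cast_sub (ZMod.val_lt t).le]
  field_simp
  ring

lemma sum_B1ZMod : ∑ t : ZMod c, B1ZMod c t = 0 := by
  have h := Equiv.sum_comp (Equiv.neg (ZMod c)) (B1ZMod c)
  simp only [Equiv.neg_apply, B1ZMod_neg, Finset.sum_neg_distrib] at h
  linarith

lemma B1ZMod_add_one_sub (t : ZMod c) :
    B1ZMod c (t + 1) - B1ZMod c t
      = 1 / c - (if t = 0 then 1 / 2 else 0) - (if t = -1 then 1 / 2 else 0) := by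
  have hc : (c : ℝ) ≠ 0 := NeZero.ne _
  have hsucc : t + 1 = ((t.val + 1 : ℕ) : ZMod c) := by
    rw [Nat.cast_succ, ZMod.natCast_zmod_val]
  simp only [B1ZMod_eq, eq_neg_iff_add_eq_zero]
  have hval_lt := ZMod.val_lt t
  obtain hlt | heq : t.val + 1 < c ∨ t.val + 1 = c := by omega
  · have hval : (t + 1).val = t.val + 1 := by rw [hsucc, ZMod.val_cast_of_lt hlt]
    have hne : t + 1 ≠ 0 := by
      rw [Ne, ← ZMod.val_eq_zero, hval]
      exact Nat.succ_ne_zero _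
    rw [hval, if_neg hne]
    push_cast
    split_ifs <;> field_simp <;> ring
  · have hzero : t + 1 = 0 := by rw [hsucc, heq, ZMod.natCast_self]
    have hval : (t.val : ℝ) + 1 = c := by exact_mod_cast heq
    rw [hzero, ZMod.val_zero, Nat.cast_zero, if_pos rfl]
    split_ifs <;> field_simp <;> linarith

lemma sum_B1ZMod_add_one_sub_mul (f : ZMod c → ℝ) (hf : ∑ t, f t = 0) :
    ∑ t, (B1ZMod c (t + 1) - B1ZMod c t) * f t = -(1 / 2) * (f 0 + f (-1)) := by
  simp only [B1ZMod_add_one_sub, sub_mul, ite_mul, zero_mul, Finset.sum_sub_distrib,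
    Finset.sum_ite_eq', Finset.mem_univ, if_true, ← Finset.mul_sum, hf]
  ring

lemma sum_B1ZMod_add_sub_mul (f : ZMod c → ℝ) (hf : ∑ t, f t = 0) (N : ℕ) :
    ∑ t, (B1ZMod c (t + N) - B1ZMod c t) * f t
      = -(1 / 2) * ∑ k ∈ Finset.range N, (f (-k) + f (-k - 1)) := by
  induction N with
  | zero => simp
  | succ N ih =>
    have hshift : ∑ t, (B1ZMod c (t + N + 1) - B1ZMod c (t + N)) * f t
        = -(1 / 2) * (f (-N) + f (-N - 1)) := by
      have hfN : ∑ s, f (s - N) = 0 := (Equiv.sum_comp (Equiv.subRight (N : ZMod c)) f).trans hf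
      have h := Equiv.sum_comp (Equiv.addRight (N : ZMod c))
        fun s => (B1ZMod c (s + 1) - B1ZMod c s) * f (s - N)
      simp only [Equiv.coe_addRight, add_sub_cancel_right] at h
      rw [h, sum_B1ZMod_add_one_sub_mul _ hfN]
      ring_nf
    push_cast
    rw [Finset.sum_range_succ, mul_add, ← ih, ← hshift, ← Finset.sum_add_distrib]
    congr! 1 with t
    ring_nf

lemma sum_B1ZMod_sub_mul_B1ZMod {a d : ZMod c} (had : a * d = 1) (N : ℕ) :
    ∑ m, (B1ZMod c (N - m * a) - B1ZMod c (-(m * a))) * B1ZMod c m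
      = 1 / 2 * B1ZMod c (N * d) - ∑ k ∈ Finset.Icc 1 N, B1ZMod c (k * d) := by
  have hda : d * a = 1 := by rw [mul_comm, had]
  have hbij : Function.Bijective fun t : ZMod c => -(t * d) :=
    Function.bijective_iff_has_inverse.mpr ⟨fun m => -(m * a),
      fun t => by simp [mul_assoc, hda], fun m => by simp [mul_assoc, had]⟩
  have hsum : ∑ t, B1ZMod c (-(t * d)) = 0 :=
    (Fintype.sum_bijective _ hbij _ _ fun _ => rfl).trans sum_B1ZMod
  have hreindex : ∑ m, (B1ZMod c (N - m * a) - B1ZMod c (-(m * a))) * B1ZMod c m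
      = ∑ t, (B1ZMod c (t + N) - B1ZMod c t) * B1ZMod c (-(t * d)) :=
    (Fintype.sum_bijective _ hbij _ _ fun t => by simp [mul_assoc, hda, add_comm]).symm
  have hterm : ∀ k : ℕ, B1ZMod c (-(-(k : ZMod c) * d)) + B1ZMod c (-((-k - 1) * d))
      = B1ZMod c (k * d) + B1ZMod c ((k + 1 : ℕ) * d) := by
    intro k
    push_cast
    ring_nf
  rw [hreindex, sum_B1ZMod_add_sub_mul _ hsum, Finset.sum_congr rfl fun k _ => hterm k,
    sum_range_add_succ_eq_sum_Icc (fun k => B1ZMod c (k * d)), Nat.cast_zero, zero_mul,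
    B1ZMod_zero]
  ring

lemma B1ZMod_intCast_of_ne_zero {k : ℤ} (hk : (k : ZMod c) ≠ 0) :
    B1ZMod c k = Int.fract ((k : ℝ) / c) - 1 / 2 := by
  have hc : (c : ℝ) ≠ 0 := NeZero.ne _
  rw [← B1_intCast_div, B1, if_neg]
  rintro ⟨n, hn⟩
  refine hk ((ZMod.intCast_zmod_eq_zero_iff_dvd k c).mpr ⟨n, ?_⟩)
  rw [eq_div_iff hc] at hn
  exact_mod_cast (by linarith : (k : ℝ) = c * n)

lemma sum_Icc_B1ZMod_mul {d : ℤ} (hd : IsUnit (d : ZMod c)) {N : ℕ} (hN : N < c) :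
    ∑ m ∈ Finset.Icc 1 N, B1ZMod c (m * d)
      = ∑ m ∈ Finset.Icc 1 N, Int.fract ((m : ℝ) * d / c) - N / 2 := by
  have hterm : ∀ m ∈ Finset.Icc 1 N, B1ZMod c (m * d) = Int.fract ((m : ℝ) * d / c) - 1 / 2 := by
    intro m hm
    rw [Finset.mem_Icc] at hm
    have hm0 : (m : ZMod c) ≠ 0 := by
      rw [Ne, ZMod.natCast_eq_zero_iff]
      exact fun hdvd => absurd (Nat.eq_zero_of_dvd_of_lt hdvd (by omega)) (by omega)
    have h := B1ZMod_intCast_of_ne_zero (c := c) (k := m * d)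
      (by push_cast; exact (hd.mul_left_eq_zero).not.mpr hm0)
    push_cast at h
    exact h
  rw [Finset.sum_congr rfl hterm, Finset.sum_sub_distrib, Finset.sum_const, Nat.card_Icc,
    nsmul_eq_mul, Nat.add_sub_cancel]
  ring

lemma sum_range_natCast_eq_sum {M : Type*} [AddCommMonoid M] (g : ZMod c → M) :
    ∑ m ∈ Finset.range c, g m = ∑ t, g t :=
  Finset.sum_nbij' (fun m => (m : ZMod c)) ZMod.val (fun _ _ => Finset.mem_univ _)
    (fun t _ => Finset.mem_range.mpr (ZMod.val_lt t))
    (fun _ hm => ZMod.val_cast_of_lt (Finset.mem_range.mp hm))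
    (fun t _ => ZMod.natCast_zmod_val t) (fun _ _ => rfl)

lemma DR_neg_intCast_add_div (a k : ℤ) (N : ℕ) :
    DR (-a) c ((k : ℝ) + N / c) 0 = ∑ m : ZMod c, B1ZMod c (N - m * a) * B1ZMod c m := by
  rw [DR, Int.natAbs_natCast, ← sum_range_natCast_eq_sum]
  refine Finset.sum_congr rfl fun m _ => ?_
  have hfirst : (k : ℝ) + N / c + (0 + m) * ((-a : ℤ) : ℝ) / ((c : ℤ) : ℝ)
      = ((N - m * a : ℤ) : ℝ) / c + k := by
    push_cast
    ring
  have hsecond : (0 + (m : ℝ)) / ((c : ℤ) : ℝ) = ((m : ℤ) : ℝ) / c := by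
    push_cast
    ring
  rw [hfirst, hsecond, B1_add_intCast, B1_intCast_div, B1_intCast_div]
  push_cast
  rfl

lemma DR_neg_sub_DR_neg {a d : ℤ} (had : (a : ZMod c) * d = 1) (k n : ℤ) {N : ℕ} (hN : N < c) :
    DR (-a) c (k + N / c) 0 - DR (-a) c n 0
      = 1 / 2 * B1 (d * (k + N / c)) + c / 2 * Int.fract ((k : ℝ) + N / c)
        - ∑ m ∈ Finset.Icc 1 N, Int.fract ((m : ℝ) * d / c) := by
  have hc : (c : ℝ) ≠ 0 := NeZero.ne _
  have hn : (n : ℝ) = n + ((0 : ℕ) : ℝ) / c := by simp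
  have hB1 : B1 (d * (k + N / c)) = B1ZMod c (N * d) := by
    have h : (d : ℝ) * (k + N / c) = ((N * d : ℤ) : ℝ) / c + (d * k : ℤ) := by
      push_cast
      ring
    rw [h, B1_add_intCast, B1_intCast_div]
    push_cast
    rfl
  have hfract : (c : ℝ) / 2 * Int.fract ((k : ℝ) + N / c) = N / 2 := by
    rw [Int.fract_intCast_add, Int.fract_eq_self.mpr
      ⟨by positivity, (div_lt_one (Nat.cast_pos.mpr (NeZero.pos c))).mpr (by exact_mod_cast hN)⟩]
    field_simp
  rw [hn, DR_neg_intCast_add_div, DR_neg_intCast_add_div, ← Finset.sum_sub_distrib, hB1, hfract]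
  simp only [← sub_mul, Nat.cast_zero, zero_sub]
  rw [sum_B1ZMod_sub_mul_B1ZMod had, sum_Icc_B1ZMod_mul (IsUnit.of_mul_eq_one_right _ had) hN]
  ring

end ZModSums

lemma Real.sign_mul_of_pos {x : ℝ} (hx : 0 < x) (y : ℝ) : Real.sign (x * y) = Real.sign y := by
  rcases lt_trichotomy y 0 with hy | rfl | hy
  · rw [Real.sign_of_neg hy, Real.sign_of_neg (mul_neg_of_pos_of_neg hx hy)]
  · rw [mul_zero]
  · rw [Real.sign_of_pos hy, Real.sign_of_pos (mul_pos hx hy)]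

lemma B2_intCast (k : ℤ) : B2 k = 1 / 6 := by
  simp [B2]

lemma Z0_zero_of_mul_eq_intCast {a c : ℤ} (hc : 0 < c) (hac : Int.gcd a c = 1) {x : ℚ} {k : ℤ}
    (hk : c * x = k) (ω₁ ω₂ : ℝ) :
    Z0 a c x 0 ω₁ ω₂
      = (1 / (2 * c * (a + c * (ω₂ / ω₁))) + (a + c * (ω₂ / ω₁)) / (2 * c)) / 6 + DR (-a) c x 0
        - Real.sign (a + c * (ω₂ / ω₁)) / 4 * indZ x := by
  have hck : (c : ℝ) * x = k := by exact_mod_cast congrArg (Rat.cast : ℚ → ℝ) hk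
  have hB2zero : B2 0 = 1 / 6 := by simpa using B2_intCast 0
  simp only [Z0, hac, Nat.cast_one, one_pow, div_one, Rat.cast_zero, mul_zero, sub_zero, hck,
    B2_intCast, hB2zero, Real.sign_of_pos (Int.cast_pos.mpr hc),
    Real.sign_mul_of_pos (Int.cast_pos.mpr hc), indZ, Rat.den_zero, if_true]
  ring

lemma pos_and_lt_of_natCast_eq_mul_fract {x : ℚ} (hx : x.den ≠ 1) {c : ℤ} (hc : 0 < c) {N : ℕ}
    (hN : (N : ℚ) = c * Int.fract x) : 0 < N ∧ (N : ℤ) < c := by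
  have hfract_pos : 0 < Int.fract x :=
    Int.fract_pos.mpr fun h => hx (by rw [h]; exact Rat.den_intCast _)
  have hcQ : (0 : ℚ) < c := by exact_mod_cast hc
  constructor
  · exact_mod_cast (hN ▸ mul_pos hcQ hfract_pos : (0 : ℚ) < N)
  · exact_mod_cast (hN ▸ mul_lt_of_lt_one_right hcQ (Int.fract_lt_one x) : (N : ℚ) < c)

theorem statement7_general (a b c d : ℤ) (hdet : a * d - b * c = 1) (hc : 0 < c)
    (x₁ : ℚ)
    (hx : ∃ n : ℤ, x₁ = (n : ℚ) / (Int.gcd c (a - 1) : ℚ)) (hx' : x₁.den ≠ 1)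
    (ω₁ ω₂ : ℝ)
    (N : ℕ) (hN : (N : ℚ) = c * (x₁ - ⌊x₁⌋)) :
    0 < N ∧
    Z0 a c x₁ 0 ω₁ ω₂
      - Z0 a c ((Int.gcd c (a - 1) : ℚ) * x₁) 0
          (ω₁ / (Int.gcd c (a - 1) : ℝ)) (ω₂ / (Int.gcd c (a - 1) : ℝ))
    = Real.sign ((a : ℝ) + c * (ω₂ / ω₁)) / 4
      + (1 / 2) * B1 ((d : ℝ) * (x₁ : ℝ))
      + (c : ℝ) / 2 * Int.fract (x₁ : ℝ)
      - ∑ m ∈ Finset.Icc 1 N, Int.fract ((m : ℝ) * d / c) := by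
  obtain ⟨n, hxn⟩ := hx
  have hL : (Int.gcd c (a - 1) : ℚ) ≠ 0 := by
    exact_mod_cast (Int.gcd_pos_of_ne_zero_left _ hc.ne').ne'
  have hLx : (Int.gcd c (a - 1) : ℚ) * x₁ = n := by rw [hxn]; field_simp
  have hNfract : (N : ℚ) = c * Int.fract x₁ := by rw [hN, Int.self_sub_floor]
  obtain ⟨hN0, hNc⟩ := pos_and_lt_of_natCast_eq_mul_fract hx' hc hNfract
  have hac : Int.gcd a c = 1 := Int.isCoprime_iff_gcd_eq_one.mp ⟨d, -b, by linear_combination hdet⟩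
  refine ⟨hN0, ?_⟩
  rw [Z0_zero_of_mul_eq_intCast hc hac (k := c * ⌊x₁⌋ + N)
      (by push_cast; rw [hNfract, ← Int.self_sub_floor]; ring),
    Z0_zero_of_mul_eq_intCast hc hac (k := c * n) (by rw [hLx]; push_cast; ring),
    div_div_div_cancel_right₀ (by exact_mod_cast hL), hLx]
  lift c to ℕ using hc.le
  have : NeZero c := ⟨by omega⟩
  have hx₁ : (x₁ : ℝ) = ⌊x₁⌋ + N / c := by
    have h := congrArg (Rat.cast : ℚ → ℝ) hN
    push_cast at h
    rw [h]
    field_simp [NeZero.ne (c : ℝ)]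
    ring
  have had : (a : ZMod c) * d = 1 := by
    have h := congrArg (Int.cast : ℤ → ZMod c) hdet
    push_cast at h
    rwa [ZMod.natCast_self, mul_zero, sub_zero] at h
  have hind : indZ (n : ℚ) = 1 := by simp [indZ]
  simp only [Int.cast_natCast, Rat.cast_intCast]
  rw [indZ, if_neg hx', hind, hx₁]
  linear_combination DR_neg_sub_DR_neg had ⌊x₁⌋ n (by exact_mod_cast hNc)

/-- **Theorem (Statement 7).** Closed form for the difference of cocycle values. -/
theorem statement7 (a b c d : ℤ) (hdet : a * d - b * c = 1) (hc : 0 < c)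
    (hl : 1 < Int.gcd c (a - 1)) (x₁ : ℚ)
    (hx : ∃ n : ℤ, x₁ = (n : ℚ) / (Int.gcd c (a - 1) : ℚ)) (hx' : x₁.den ≠ 1)
    (ω₁ ω₂ : ℝ) (hω : LinearIndependent ℚ ![ω₁, ω₂])
    (N : ℕ) (hN : (N : ℚ) = c * (x₁ - ⌊x₁⌋)) :
    0 < N ∧
    Z0 a c x₁ 0 ω₁ ω₂
      - Z0 a c ((Int.gcd c (a - 1) : ℚ) * x₁) 0
          (ω₁ / (Int.gcd c (a - 1) : ℝ)) (ω₂ / (Int.gcd c (a - 1) : ℝ))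
    = Real.sign ((a : ℝ) + c * (ω₂ / ω₁)) / 4
      + (1 / 2) * B1 ((d : ℝ) * (x₁ : ℝ))
      + (c : ℝ) / 2 * Int.fract (x₁ : ℝ)
      - ∑ m ∈ Finset.Icc 1 N, Int.fract ((m : ℝ) * d / c) :=
  statement7_general a b c d hdet hc x₁ hx hx' ω₁ ω₂ N hN
end

section
/- Let γ=((a,b),(c,d)) ∈ SL₂(ℤ) with c>0, and let x₁ ∈ ℚ with c·x₁ ∈ ℤ and x₁ ∉ ℤ. Then the number of integral points in the interior of the triangle T_{γ,x} := {x₁}·T_γ equals Σ_{m=1}^{c{x₁}−1} (⌊m·d/c⌋ − ⌊m·(d−1)/c⌋). -/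
open scoped Pointwise Classical
open MeasureTheory

/-!
For `t > 0` the dilated triangle `t • T_γ` is cut out by `y ≥ 0`, `c x ≤ (a - 1) y` and
`a y - t c ≤ c x`, and its interior by the strict inequalities. Put `N = t c`. The unimodular
change of coordinates `m = a y - c x`, `j = b y - d x` (inverse `x = b m - a j`, `y = d m - c j`)
turns the interior lattice points into the pairs `(m, j)` with `m < N` and
`m (d - 1) < c j < m d`. For `0 < m < c` the number `m d` is not a multiple of `c`, because
`gcd(c, d) = 1`, so column `m` holds exactly `⌊m d / c⌋ - ⌊m (d - 1) / c⌋` values of `j`.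
-/

def halfPlane (α β r : ℝ) : Set (ℝ × ℝ) := {p | r ≤ α * p.1 + β * p.2}

lemma mem_halfPlane {α β r : ℝ} {p : ℝ × ℝ} : p ∈ halfPlane α β r ↔ r ≤ α * p.1 + β * p.2 :=
  Iff.rfl

lemma convex_halfPlane (α β r : ℝ) : Convex ℝ (halfPlane α β r) :=
  convex_halfSpace_ge ⟨fun p q => by simp only [Prod.fst_add, Prod.snd_add]; ring,
    fun s p => by simp only [Prod.smul_fst, Prod.smul_snd, smul_eq_mul]; ring⟩ r

lemma interior_setOf_le_apply {E : Type*} [AddCommGroup E] [TopologicalSpace E] [ContinuousAdd E]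
    [Module ℝ E] [ContinuousSMul ℝ E] (ℓ : StrongDual ℝ E) (hℓ : ℓ ≠ 0) (r : ℝ) :
    interior {x | r ≤ ℓ x} = {x | r < ℓ x} := by
  change interior (ℓ ⁻¹' Set.Ici r) = ℓ ⁻¹' Set.Ioi r
  rw [← (ℓ.isOpenMap_of_ne_zero hℓ).preimage_interior_eq_interior_preimage ℓ.continuous,
    interior_Ici]

lemma interior_halfPlane {α β : ℝ} (h : α ≠ 0 ∨ β ≠ 0) (r : ℝ) :
    interior (halfPlane α β r) = {p | r < α * p.1 + β * p.2} := by
  let ℓ : StrongDual ℝ (ℝ × ℝ) :=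
    α • ContinuousLinearMap.fst ℝ ℝ ℝ + β • ContinuousLinearMap.snd ℝ ℝ ℝ
  have hℓ : ∀ p, ℓ p = α * p.1 + β * p.2 := fun p => rfl
  have hℓ0 : ℓ ≠ 0 := by
    intro h0
    have h₁ := congrArg (· (1, 0)) h0
    have h₂ := congrArg (· (0, 1)) h0
    simp only [hℓ, zero_apply] at h₁ h₂
    rcases h with h | h <;> simp_all
  exact interior_setOf_le_apply ℓ hℓ0 r

section Triangle

variable {a c : ℤ} {t : ℝ}

lemma smul_tri_eq (hc : 0 < c) (ht : 0 < t) :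
    t • Tri a c = halfPlane 0 1 0 ∩ halfPlane (-c) (a - 1) 0 ∩ halfPlane c (-a) (-(t * c)) := by
  have htc : 0 < t * c := mul_pos ht (by exact_mod_cast hc)
  rw [Tri, ← convexHull_smul]
  simp only [Set.smul_set_insert, Set.smul_set_singleton, Prod.smul_mk, smul_eq_mul, mul_zero]
  apply subset_antisymm
  · refine convexHull_min ?_ (((convex_halfPlane ..).inter (convex_halfPlane ..)).inter
      (convex_halfPlane ..))
    simp only [Set.insert_subset_iff, Set.singleton_subset_iff, Set.mem_inter_iff, mem_halfPlane]
    refine ⟨?_, ?_, ?_⟩ <;> refine ⟨⟨?_, ?_⟩, ?_⟩ <;> nlinarith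
  · rintro ⟨x, y⟩ ⟨⟨h₁, h₂⟩, h₃⟩
    simp only [mem_halfPlane] at h₁ h₂ h₃
    let w : Fin 3 → ℝ :=
      ![(t * c + c * x - a * y) / (t * c), y / (t * c), ((a - 1) * y - c * x) / (t * c)]
    let z : Fin 3 → ℝ × ℝ := ![(0, 0), (t * (a - 1), t * c), (-t, 0)]
    have hxy : (x, y) = ∑ i, w i • z i := by
      simp only [w, z, Fin.sum_univ_three, Matrix.cons_val_zero, Matrix.cons_val_one,
        Matrix.cons_val_two, Matrix.head_cons, Matrix.tail_cons, Prod.smul_mk, smul_eq_mul,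
        Prod.mk_add_mk, mul_zero, add_zero, zero_add]
      ext
      · field_simp
        ring
      · field_simp
    rw [hxy]
    refine (convex_convexHull ℝ _).sum_mem (fun i _ => ?_) ?_ (fun i _ => ?_)
    · fin_cases i <;>
        simp only [w, Fin.zero_eta, Fin.mk_one, Fin.reduceFinMk, Fin.isValue, Matrix.cons_val,
          Matrix.cons_val_zero, Matrix.cons_val_one] <;>
        apply div_nonneg <;> linarith
    · simp only [w, Fin.sum_univ_three, Matrix.cons_val_zero, Matrix.cons_val_one,
        Matrix.cons_val_two, Matrix.head_cons, Matrix.tail_cons]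
      field_simp
      ring
    · fin_cases i <;> exact subset_convexHull ℝ _ (by simp [z])

lemma mem_interior_smul_tri_iff (hc : 0 < c) (ht : 0 < t) {p : ℝ × ℝ} :
    p ∈ interior (t • Tri a c) ↔
      0 < p.2 ∧ c * p.1 < (a - 1) * p.2 ∧ a * p.2 - t * c < c * p.1 := by
  have hc' : (c : ℝ) ≠ 0 := by exact_mod_cast hc.ne'
  rw [smul_tri_eq hc ht, interior_inter, interior_inter, interior_halfPlane (Or.inr one_ne_zero),
    interior_halfPlane (Or.inl (neg_ne_zero.2 hc')), interior_halfPlane (Or.inl hc')]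
  simp only [Set.mem_inter_iff, Set.mem_ofPred_eq]
  constructor
  · rintro ⟨⟨h₁, h₂⟩, h₃⟩
    exact ⟨by linarith, by linarith, by linarith⟩
  · rintro ⟨h₁, h₂, h₃⟩
    exact ⟨⟨by linarith, by linarith⟩, by linarith⟩

lemma latticeCount_interior_smul_tri (hc : 0 < c) (ht : 0 < t) {N : ℤ} (htN : t * c = N) :
    latticeCount (interior (t • Tri a c)) =
      {p : ℤ × ℤ | 0 < p.2 ∧ c * p.1 < (a - 1) * p.2 ∧ a * p.2 - N < c * p.1}.ncard := by
  unfold latticeCount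
  congr 1
  ext p
  simp only [Set.mem_ofPred_eq, mem_interior_smul_tri_iff hc ht, htN]
  norm_cast

end Triangle

def unimodularEquiv (a b c d : ℤ) (hdet : a * d - b * c = 1) : ℤ × ℤ ≃ ℤ × ℤ where
  toFun p := (a * p.2 - c * p.1, b * p.2 - d * p.1)
  invFun q := (b * q.1 - a * q.2, d * q.1 - c * q.2)
  left_inv p := Prod.ext (by linear_combination p.1 * hdet) (by linear_combination p.2 * hdet)
  right_inv q := Prod.ext (by linear_combination q.1 * hdet) (by linear_combination q.2 * hdet)

lemma ncard_lattice_triangle_eq {a b c d : ℤ} (hdet : a * d - b * c = 1) (N : ℤ) :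
    {p : ℤ × ℤ | 0 < p.2 ∧ c * p.1 < (a - 1) * p.2 ∧ a * p.2 - N < c * p.1}.ncard =
      {q : ℤ × ℤ | q.1 < N ∧ q.1 * (d - 1) < q.2 * c ∧ q.2 * c < q.1 * d}.ncard := by
  rw [← Set.ncard_image_of_injective _ (unimodularEquiv a b c d hdet).injective,
    Equiv.image_eq_preimage_symm]
  congr 1
  ext ⟨m, j⟩
  have hm : (a * d - b * c) * m = m := by rw [hdet, one_mul]
  simp only [Set.mem_ofPred_eq, Set.mem_preimage, unimodularEquiv, Equiv.coe_fn_symm_mk]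
  constructor
  · rintro ⟨h₁, h₂, h₃⟩
    exact ⟨by linarith, by linarith, by linarith⟩
  · rintro ⟨h₁, h₂, h₃⟩
    exact ⟨by linarith, by linarith, by linarith⟩

lemma Nat.map_castEmbedding_Icc (a b : ℕ) :
    (Finset.Icc a b).map Nat.castEmbedding = Finset.Icc (a : ℤ) b := by
  rw [← Finset.coe_inj, Finset.coe_map, Finset.coe_Icc, Finset.coe_Icc]
  exact Nat.image_cast_int_Icc a b

lemma Set.ncard_setOf_fst_mem_snd_mem {α β : Type*} (s : Finset α) (t : α → Finset β) :
    {q : α × β | q.1 ∈ s ∧ q.2 ∈ t q.1}.ncard = ∑ m ∈ s, (t m).card := by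
  have h : {q : α × β | q.1 ∈ s ∧ q.2 ∈ t q.1} = Equiv.sigmaEquivProd α β '' ↑(s.sigma t) := by
    ext ⟨m, j⟩
    simp
  rw [h, Set.ncard_image_of_injective _ (Equiv.injective _), Set.ncard_coe_finset,
    Finset.card_sigma]

lemma setOf_lt_mul_lt_eq_Ioc {A B c : ℤ} (hc : 0 < c) (hB : ¬ c ∣ B) :
    {j : ℤ | A < j * c ∧ j * c < B} = Finset.Ioc (A / c) (B / c) := by
  ext j
  simp only [Set.mem_ofPred_eq, Finset.coe_Ioc, Set.mem_Ioc, Int.ediv_lt_iff_lt_mul hc,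
    Int.le_ediv_iff_mul_le hc]
  have hjB : j * c ≠ B := fun h => hB ⟨j, by rw [← h, mul_comm]⟩
  constructor
  · rintro ⟨h₁, h₂⟩
    exact ⟨h₁, h₂.le⟩
  · rintro ⟨h₁, h₂⟩
    exact ⟨h₁, lt_of_le_of_ne h₂ hjB⟩

lemma ncard_setOf_lt_mul_lt_eq_sum {c d : ℤ} (hc : 0 < c) (hcd : IsCoprime c d) {N : ℕ}
    (hN : (N : ℤ) ≤ c) :
    ({q : ℤ × ℤ | q.1 < N ∧ q.1 * (d - 1) < q.2 * c ∧ q.2 * c < q.1 * d}.ncard : ℤ) =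
      ∑ m ∈ Finset.Icc 1 (N - 1), ((m : ℤ) * d / c - (m : ℤ) * (d - 1) / c) := by
  have hfiber : ∀ m : ℤ, 0 < m → m < c →
      {j : ℤ | m * (d - 1) < j * c ∧ j * c < m * d} = Finset.Ioc (m * (d - 1) / c) (m * d / c) :=
    fun m hm hmc => setOf_lt_mul_lt_eq_Ioc hc fun h =>
      (Int.le_of_dvd hm (hcd.dvd_of_dvd_mul_right h)).not_gt hmc
  have hset : {q : ℤ × ℤ | q.1 < N ∧ q.1 * (d - 1) < q.2 * c ∧ q.2 * c < q.1 * d} =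
      {q | q.1 ∈ Finset.Icc (1 : ℤ) ((N - 1 : ℕ) : ℤ) ∧
        q.2 ∈ Finset.Ioc (q.1 * (d - 1) / c) (q.1 * d / c)} := by
    ext ⟨m, j⟩
    simp only [Set.mem_ofPred_eq, Finset.mem_Icc]
    constructor
    · rintro ⟨hmN, hj⟩
      have hm : 0 < m := by linarith
      rw [← Finset.mem_coe, ← hfiber m hm (by omega)]
      exact ⟨by omega, hj⟩
    · rintro ⟨hm, hj⟩
      rw [← Finset.mem_coe, ← hfiber m (by omega) (by omega)] at hj
      exact ⟨by omega, hj⟩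
  rw [hset, Set.ncard_setOf_fst_mem_snd_mem _ fun m => Finset.Ioc (m * (d - 1) / c) (m * d / c),
    show Finset.Icc (1 : ℤ) ((N - 1 : ℕ) : ℤ) = (Finset.Icc 1 (N - 1)).map Nat.castEmbedding by
      rw [Nat.map_castEmbedding_Icc, Nat.cast_one], Finset.sum_map]
  push_cast
  refine Finset.sum_congr rfl fun m _ => Int.card_Ioc_of_le _ _ (Int.ediv_le_ediv hc ?_)
  exact mul_le_mul_of_nonneg_left (by linarith) (Int.natCast_nonneg m)

lemma Rat.floor_intCast_div_intCast {n c : ℤ} (hc : 0 < c) : ⌊(n : ℚ) / c⌋ = n / c := by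
  lift c to ℕ using hc.le
  exact_mod_cast Rat.floor_intCast_div_natCast n c

theorem statement9_general (a b c d : ℤ) (hdet : a * d - b * c = 1) (hc : 0 < c)
    (x₁ : ℚ) (hx' : x₁.den ≠ 1)
    (N : ℕ) (hN : (N : ℚ) = c * (x₁ - ⌊x₁⌋)) :
    (latticeCount (interior (Int.fract (x₁ : ℝ) • Tri a c)) : ℤ)
      = ∑ m ∈ Finset.Icc 1 (N - 1),
          (⌊((m : ℚ) * (d : ℚ) / (c : ℚ))⌋ - ⌊((m : ℚ) * ((d : ℚ) - 1) / (c : ℚ))⌋) := by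
  rw [Int.self_sub_floor] at hN
  have hfract : 0 < Int.fract x₁ := Int.fract_pos.2 fun h => hx' (by rw [h, Rat.den_intCast])
  have htN : Int.fract (x₁ : ℝ) * c = N := by
    rw [← Rat.cast_fract]
    exact_mod_cast (mul_comm _ _).trans hN.symm
  have hNc : (N : ℤ) ≤ c := by
    have : (N : ℚ) ≤ c := hN ▸ mul_le_of_le_one_right (by positivity) (Int.fract_lt_one x₁).le
    exact_mod_cast this
  rw [latticeCount_interior_smul_tri hc (by exact_mod_cast hfract) (by exact_mod_cast htN),
    ncard_lattice_triangle_eq hdet, ncard_setOf_lt_mul_lt_eq_sum hc ⟨-b, a, by linarith⟩ hNc]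
  refine Finset.sum_congr rfl fun m _ => ?_
  rw [← Rat.floor_intCast_div_intCast hc, ← Rat.floor_intCast_div_intCast hc]
  push_cast
  rfl

/-- **Theorem (Statement 9).** Number of interior lattice points of `T_{γ,x}` as a sum
of differences of floors. -/
theorem statement9 (a b c d : ℤ) (hdet : a * d - b * c = 1) (hc : 0 < c)
    (x₁ : ℚ) (hx : ∃ n : ℤ, (c : ℚ) * x₁ = (n : ℚ)) (hx' : x₁.den ≠ 1)
    (N : ℕ) (hN : (N : ℚ) = c * (x₁ - ⌊x₁⌋)) :
    (latticeCount (interior (Int.fract (x₁ : ℝ) • Tri a c)) : ℤ)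
      = ∑ m ∈ Finset.Icc 1 (N - 1),
          (⌊((m : ℚ) * (d : ℚ) / (c : ℚ))⌋ - ⌊((m : ℚ) * ((d : ℚ) - 1) / (c : ℚ))⌋) :=
  statement9_general a b c d hdet hc x₁ hx' N hN
end

section
/- Let γ=((a,b),(c,d)) ∈ SL₂(ℤ) with c>0 and ℓ_γ := gcd(c,a−1), and let x₁ ∈ ℓ_γ⁻¹ℤ ∖ ℤ. Then the open line segment in ℝ² joining the points (−{x₁}, 0) and ((a−1){x₁}, c{x₁}) (both endpoints excluded) contains no points of ℤ². (This is the edge of T_{γ,x} joining −{x₁}e₁ and (a−1){x₁}e₁ + c{x₁}e₂, endpoints excluded.) -/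
open scoped Pointwise Classical
open MeasureTheory

/-! A lattice point `(m, n)` on the open edge satisfies `c m = a n - N` with `N = c{x₁}`, an integer
because `ℓ_γ {x₁} ∈ ℤ` and `ℓ_γ ∣ c`, and `0 < n < N < c`. Reducing modulo `c` with the inverse `d`
of `a`, and using `d ≡ 1 (mod ℓ_γ)`, gives `n ≡ N (mod c)`, which is impossible. -/

theorem Int.dvd_sub_one_of_det_eq_one {a b c d ℓ : ℤ} (hdet : a * d - b * c = 1)
    (hℓc : ℓ ∣ c) (hℓa : ℓ ∣ a - 1) : ℓ ∣ d - 1 := by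
  have : d - 1 = (a - 1) * (-d) + c * b := by linear_combination hdet
  rw [this]
  exact dvd_add (hℓa.mul_right _) (hℓc.mul_right _)

theorem Int.dvd_sub_of_det_eq_one {a b c d ℓ m n N : ℤ} (hdet : a * d - b * c = 1)
    (hℓc : ℓ ∣ c) (hℓa : ℓ ∣ a - 1) (hN : c ∣ ℓ * N) (hmn : c * m = a * n - N) :
    c ∣ n - N := by
  obtain ⟨e, he⟩ := Int.dvd_sub_one_of_det_eq_one hdet hℓc hℓa
  have : n - N = c * (d * m - b * n) + e * (ℓ * N) := by
    linear_combination (-d) * hmn - n * hdet + N * he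
  rw [this]
  exact dvd_add (dvd_mul_right _ _) (hN.mul_left _)

theorem mul_eq_and_bounds_of_mem_openSegment {a c r x y : ℝ} (hcr : 0 < c * r)
    (h : (x, y) ∈ openSegment ℝ (-r, 0) ((a - 1) * r, c * r)) :
    c * x = a * y - c * r ∧ 0 < y ∧ y < c * r := by
  obtain ⟨s, t, hs, ht, hst, heq⟩ := h
  simp only [Prod.smul_mk, Prod.mk_add_mk, Prod.mk.injEq, smul_eq_mul] at heq
  obtain ⟨hx, hy⟩ := heq
  refine ⟨by linear_combination (-c) * hx + a * hy - c * r * hst, ?_, ?_⟩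
  · rw [← hy]; positivity
  · rw [← hy]; nlinarith

theorem exists_int_mul_fract_eq {ℓ n : ℤ} {x : ℝ} (hx : ℓ * x = n) :
    ∃ p : ℤ, ℓ * Int.fract x = p :=
  ⟨n - ℓ * ⌊x⌋, by rw [Int.fract, mul_sub, hx]; push_cast; ring⟩

theorem Rat.fract_cast_pos {x : ℚ} (hx : x.den ≠ 1) : 0 < Int.fract (x : ℝ) := by
  rw [← Rat.cast_fract, Rat.cast_pos]
  refine (Int.fract_nonneg x).lt_of_ne' (Int.fract_ne_zero_iff.mpr ?_)
  rintro ⟨z, rfl⟩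
  exact hx (Rat.den_intCast z)

/-- **Theorem (Statement 13).** The open segment joining `(−{x₁},0)` and
`((a−1){x₁}, c{x₁})` contains no lattice points. -/
theorem statement13 (a b c d : ℤ) (hdet : a * d - b * c = 1) (hc : 0 < c)
    (x₁ : ℚ) (hx : ∃ n : ℤ, x₁ = (n : ℚ) / (Int.gcd c (a - 1) : ℚ)) (hx' : x₁.den ≠ 1) :
    ∀ m n : ℤ, ((m : ℝ), (n : ℝ)) ∉
      openSegment ℝ ((-Int.fract (x₁ : ℝ), (0 : ℝ)))
        (((a : ℝ) - 1) * Int.fract (x₁ : ℝ), (c : ℝ) * Int.fract (x₁ : ℝ)) := by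
  intro m n hmem
  set ℓ : ℤ := (Int.gcd c (a - 1) : ℤ)
  set r := Int.fract (x₁ : ℝ)
  obtain ⟨k, hk⟩ := hx
  obtain ⟨p, hp⟩ : ∃ p : ℤ, ℓ * r = p := exists_int_mul_fract_eq (n := k) <| by
    rw [hk]; push_cast [ℓ]; field_simp
  obtain ⟨c₁, hc₁⟩ : ℓ ∣ c := Int.gcd_dvd_left c (a - 1)
  have hN : (c : ℝ) * r = (c₁ * p : ℤ) := by rw [hc₁]; push_cast; rw [← hp]; ring
  have hr : 0 < r := Rat.fract_cast_pos hx'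
  obtain ⟨hmn, hn0, hnN⟩ := mul_eq_and_bounds_of_mem_openSegment (by positivity) hmem
  rw [hN] at hmn hnN
  have hNc : (c₁ * p : ℤ) < (c : ℝ) := by
    rw [← hN]; exact mul_lt_of_lt_one_right (by exact_mod_cast hc) (Int.fract_lt_one _)
  norm_cast at hmn hn0 hnN hNc
  have hdvd : c ∣ n - c₁ * p := Int.dvd_sub_of_det_eq_one hdet ⟨c₁, hc₁⟩
    (Int.gcd_dvd_right c (a - 1)) ⟨p, by rw [hc₁]; ring⟩ hmn
  have := Int.eq_zero_of_abs_lt_dvd hdvd (abs_lt.mpr ⟨by omega, by omega⟩)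
  omega
end
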